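/- For every positive integer d, the generating function for the number of Schmidt type d-fold partition diamonds satisfies ∑_{n≥0} s_d(n) q^n = ∏_{n≥1} ( ∑_{j≥0} (j+1)^d q^{jn} ), as an identity of formal power series in q over ℤ. -/

import Mathlib

/-!
Since `d ≥ 1`, the links `a₀ ≥ a₁ ≥ ⋯` of a diamond of weight `n` form a partition of `n`; they
vanish from index `n ≤ N` on and are determined by the differences `c_m = a_{m-1} - a_m`
(`1 ≤ m ≤ N`), subject only to `∑ m c_m = n`. Given the links, the `d` entries `b_{k,j}` range
independently over the `c_k + 1` integers in `[a_k, a_{k-1}]`. Hence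
`s_d(n) = ∑_{∑ m c_m = n} ∏_m (c_m + 1)^d`, which is the coefficient of `qⁿ` in
`∏_{m ≤ N} ∑_j (j + 1)^d q^{jm}`.
-/

open Finset PowerSeries

/-- A `d`-fold partition diamond: nonnegative integers `a 0, a 1, …` together with
`b k j` (representing `b_{k+1, j+1}`) satisfying `a k ≥ b k j ≥ a (k+1)`,
with all but finitely many entries equal to zero. -/
structure DFold (d : ℕ) where
  a : ℕ → ℕ
  b : ℕ → Fin d → ℕ
  upper : ∀ k j, b k j ≤ a k
  lower : ∀ k j, a (k + 1) ≤ b k j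
  fin : ∃ N, ∀ k, N ≤ k → a k = 0

/-- `sFold d n`: the number of Schmidt type `d`-fold partition diamonds of `n`
(only the links `a k` are summed). -/
noncomputable def sFold (d n : ℕ) : ℕ :=
  Set.ncard {D : DFold d | (∑ᶠ k, D.a k) = n}

theorem finsum_eq_sum_range_of_eq_zero {M : Type*} [AddCommMonoid M] {f : ℕ → M} {N : ℕ}
    (hf : ∀ k, N ≤ k → f k = 0) : ∑ᶠ k, f k = ∑ k ∈ range N, f k :=
  finsum_eq_sum_of_support_subset f fun k hk => by
    by_contra hkN
    exact hk (hf k (by simpa using hkN))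

theorem Antitone.eq_zero_of_sum_range_lt {a : ℕ → ℕ} (ha : Antitone a) {k : ℕ}
    (h : ∑ i ∈ range (k + 1), a i < k + 1) : a k = 0 := by
  by_contra hk
  have hsum : #(range (k + 1)) • 1 ≤ ∑ i ∈ range (k + 1), a i :=
    card_nsmul_le_sum _ _ _ fun i hi =>
      (Nat.one_le_iff_ne_zero.2 hk).trans (ha (Nat.lt_succ_iff.1 (mem_range.1 hi)))
  rw [card_range, smul_eq_mul, mul_one] at hsum
  omega

theorem sum_Ioc_eq_add_sum_Ioc_succ {M : Type*} [AddCommMonoid M] (c : ℕ → M) {k N : ℕ}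
    (hk : k < N) : ∑ m ∈ Ioc k N, c m = c (k + 1) + ∑ m ∈ Ioc (k + 1) N, c m := by
  rw [← Icc_add_one_left_eq_Ioc, Icc_eq_cons_Ioc hk, sum_cons]

theorem Antitone.sum_Ioc_tsub {a : ℕ → ℕ} (ha : Antitone a) {k N : ℕ} (hk : k ≤ N) :
    ∑ m ∈ Ioc k N, (a (m - 1) - a m) = a k - a N := by
  induction N, hk using Nat.le_induction with
  | base => simp
  | succ N hkN ih =>
    rw [sum_Ioc_succ_top hkN, ih, Nat.add_sub_cancel]
    have hNk : a N ≤ a k := ha hkN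
    have hN : a (N + 1) ≤ a N := ha (N.le_add_right 1)
    omega

theorem sum_range_sum_Ioc {M : Type*} [AddCommMonoid M] (c : ℕ → M) (N : ℕ) :
    ∑ k ∈ range N, ∑ m ∈ Ioc k N, c m = ∑ m ∈ Icc 1 N, m • c m := by
  rw [sum_comm' (t' := Icc 1 N) (s' := range)]
  · simp
  · intro k m
    simp only [mem_range, mem_Ioc, mem_Icc]
    omega

theorem prod_range_succ_eq_prod_Icc {M : Type*} [CommMonoid M] (f : ℕ → M) (N : ℕ) :
    ∏ k ∈ range N, f (k + 1) = ∏ m ∈ Icc 1 N, f m := by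
  rw [range_eq_Ico, prod_Ico_add', zero_add, Ico_add_one_right_eq_Icc]

/-- For `s = Icc 1 N`, such an `l` encodes a partition of `n` into parts at most `N`, `l m` being
the sum of its parts equal to `m`. -/
def dvdAntidiag (s : Finset ℕ) (n : ℕ) : Finset (ℕ →₀ ℕ) :=
  (s.finsuppAntidiag n).filter fun l => ∀ m ∈ s, m ∣ l m

theorem coeff_prod_mk_ite_dvd {R : Type*} [CommSemiring R] (s : Finset ℕ) (g : ℕ → ℕ → R)
    (n : ℕ) :
    coeff n (∏ m ∈ s, mk fun t => if m ∣ t then g m (t / m) else 0) =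
      ∑ l ∈ dvdAntidiag s n, ∏ m ∈ s, g m (l m / m) := by
  simp only [coeff_prod, coeff_mk, prod_ite_zero, dvdAntidiag, sum_filter]

section Chains

variable {N n : ℕ}

def chainOfCode (N : ℕ) (l : ℕ →₀ ℕ) (k : ℕ) : ℕ :=
  ∑ m ∈ Ioc k N, l m / m

/-- `a (m - 1) - a m` is the multiplicity of `m` in the partition conjugate to `a₀ ≥ a₁ ≥ ⋯`. -/
noncomputable def codeOfChain (N : ℕ) (a : ℕ → ℕ) : ℕ →₀ ℕ :=
  Finsupp.indicator (Icc 1 N) fun m _ => m * (a (m - 1) - a m)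

theorem antitone_chainOfCode (l : ℕ →₀ ℕ) : Antitone (chainOfCode N l) :=
  fun _ _ hkk' => sum_le_sum_of_subset (Ioc_subset_Ioc_left hkk')

theorem chainOfCode_eq_zero (l : ℕ →₀ ℕ) {k : ℕ} (hk : N ≤ k) : chainOfCode N l k = 0 := by
  rw [chainOfCode, Ioc_eq_empty (by omega), sum_empty]

theorem chainOfCode_eq_add (l : ℕ →₀ ℕ) {k : ℕ} (hk : k < N) :
    chainOfCode N l k = l (k + 1) / (k + 1) + chainOfCode N l (k + 1) :=
  sum_Ioc_eq_add_sum_Ioc_succ _ hk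

theorem sum_range_chainOfCode {l : ℕ →₀ ℕ} (hl : l ∈ dvdAntidiag (Icc 1 N) n) :
    ∑ k ∈ range N, chainOfCode N l k = n := by
  simp only [dvdAntidiag, mem_filter, mem_finsuppAntidiag] at hl
  obtain ⟨⟨hsum, -⟩, hdvd⟩ := hl
  rw [← hsum, ← sum_congr rfl fun m hm => Nat.mul_div_cancel' (hdvd m hm)]
  exact sum_range_sum_Ioc _ N

theorem codeOfChain_apply (a : ℕ → ℕ) {m : ℕ} (hm : m ∈ Icc 1 N) :
    codeOfChain N a m = m * (a (m - 1) - a m) := by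
  simp [codeOfChain, Finsupp.indicator_apply, hm]

theorem codeOfChain_mem {a : ℕ → ℕ} (ha : Antitone a) (ha0 : ∀ k, N ≤ k → a k = 0) :
    codeOfChain N a ∈ dvdAntidiag (Icc 1 N) (∑ k ∈ range N, a k) := by
  simp only [dvdAntidiag, mem_filter, mem_finsuppAntidiag]
  refine ⟨⟨?_, Finsupp.support_indicator_subset _ _⟩, fun m hm => ?_⟩
  · calc ∑ m ∈ Icc 1 N, codeOfChain N a m = ∑ m ∈ Icc 1 N, m • (a (m - 1) - a m) :=
          sum_congr rfl fun m hm => codeOfChain_apply a hm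
      _ = ∑ k ∈ range N, ∑ m ∈ Ioc k N, (a (m - 1) - a m) := (sum_range_sum_Ioc _ N).symm
      _ = ∑ k ∈ range N, a k := sum_congr rfl fun k hk => by
          rw [ha.sum_Ioc_tsub (mem_range.1 hk).le, ha0 N le_rfl, Nat.sub_zero]
  · rw [codeOfChain_apply a hm]
    exact dvd_mul_right m _

theorem chainOfCode_codeOfChain {a : ℕ → ℕ} (ha : Antitone a) (ha0 : ∀ k, N ≤ k → a k = 0) :
    chainOfCode N (codeOfChain N a) = a := by
  funext k
  rcases lt_or_ge k N with hk | hk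
  · have hm : ∀ m ∈ Ioc k N, codeOfChain N a m / m = a (m - 1) - a m := fun m hm => by
      rw [mem_Ioc] at hm
      rw [codeOfChain_apply a (mem_Icc.2 ⟨by omega, hm.2⟩), Nat.mul_div_cancel_left _ (by omega)]
    rw [chainOfCode, sum_congr rfl hm, ha.sum_Ioc_tsub hk.le, ha0 N le_rfl, Nat.sub_zero]
  · rw [chainOfCode_eq_zero _ hk, ha0 k hk]

theorem codeOfChain_chainOfCode {l : ℕ →₀ ℕ} (hl : l ∈ dvdAntidiag (Icc 1 N) n) :
    codeOfChain N (chainOfCode N l) = l := by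
  simp only [dvdAntidiag, mem_filter, mem_finsuppAntidiag] at hl
  obtain ⟨⟨-, hsupp⟩, hdvd⟩ := hl
  ext m
  by_cases hm : m ∈ Icc 1 N
  · obtain ⟨hm1, hmN⟩ := mem_Icc.1 hm
    rw [codeOfChain_apply _ hm, chainOfCode_eq_add l (show m - 1 < N by omega),
      Nat.sub_add_cancel hm1, Nat.add_sub_cancel, Nat.mul_div_cancel' (hdvd m hm)]
  · rw [codeOfChain, Finsupp.indicator_apply, dif_neg hm]
    exact (Finsupp.notMem_support_iff.1 fun h => hm (hsupp h)).symm

end Chains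

namespace DFold

variable {d n N : ℕ}

theorem ext {X Y : DFold d} (ha : X.a = Y.a) (hb : X.b = Y.b) : X = Y := by
  cases X; cases Y; cases ha; cases hb; rfl

theorem antitone_a (hd : 0 < d) (D : DFold d) : Antitone D.a :=
  antitone_nat_of_succ_le fun k => (D.lower k ⟨0, hd⟩).trans (D.upper k ⟨0, hd⟩)

theorem a_eq_zero_of_weight_le (hd : 0 < d) (D : DFold d) {k : ℕ} (hk : ∑ᶠ i, D.a i ≤ k) :
    D.a k = 0 := by
  obtain ⟨M, hM⟩ := D.fin
  refine (D.antitone_a hd).eq_zero_of_sum_range_lt ?_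
  calc ∑ i ∈ range (k + 1), D.a i ≤ ∑ i ∈ range (max (k + 1) M), D.a i :=
        sum_le_sum_of_subset (range_subset_range.2 (le_max_left _ _))
    _ = ∑ᶠ i, D.a i :=
        (finsum_eq_sum_range_of_eq_zero fun i hi => hM i (le_of_max_le_right hi)).symm
    _ < k + 1 := Nat.lt_succ_of_le hk

def diamondCodes (d n N : ℕ) : Finset ((ℕ →₀ ℕ) × (Fin N → Fin d → ℕ)) :=
  (dvdAntidiag (Icc 1 N) n).biUnion fun l =>
    {l} ×ˢ Fintype.piFinset fun k : Fin N =>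
      Fintype.piFinset fun _ : Fin d => range (l (k + 1) / (k + 1) + 1)

theorem mem_diamondCodes {p : (ℕ →₀ ℕ) × (Fin N → Fin d → ℕ)} :
    p ∈ diamondCodes d n N ↔
      p.1 ∈ dvdAntidiag (Icc 1 N) n ∧ ∀ k j, p.2 k j ≤ p.1 (k + 1) / (k + 1) := by
  simp only [diamondCodes, mem_biUnion, mem_product, mem_singleton, Fintype.mem_piFinset,
    mem_range, Nat.lt_succ_iff]
  constructor
  · rintro ⟨l, hl, rfl, hf⟩
    exact ⟨hl, hf⟩
  · rintro ⟨hl, hf⟩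
    exact ⟨p.1, hl, rfl, hf⟩

theorem card_diamondCodes :
    #(diamondCodes d n N) = ∑ l ∈ dvdAntidiag (Icc 1 N) n, ∏ m ∈ Icc 1 N, (l m / m + 1) ^ d := by
  rw [diamondCodes, card_biUnion]
  · refine sum_congr rfl fun l _ => ?_
    simp [Fin.prod_univ_eq_prod_range (fun k => (l (k + 1) / (k + 1) + 1) ^ d),
      prod_range_succ_eq_prod_Icc (fun m => (l m / m + 1) ^ d)]
  · exact fun l _ l' _ hll' => disjoint_product.2 (Or.inl (disjoint_singleton.2 hll'))

noncomputable def toCode (N : ℕ) (D : DFold d) : (ℕ →₀ ℕ) × (Fin N → Fin d → ℕ) :=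
  (codeOfChain N D.a, fun k j => D.b k j - D.a (k + 1))

/-- The `min` makes `ofCode` a diamond for every `p`; it is inactive on `diamondCodes`. -/
def ofCode (N : ℕ) (p : (ℕ →₀ ℕ) × (Fin N → Fin d → ℕ)) : DFold d where
  a := chainOfCode N p.1
  b k j := if hk : k < N then
      min (chainOfCode N p.1 (k + 1) + p.2 ⟨k, hk⟩ j) (chainOfCode N p.1 k) else 0
  upper k j := by
    split
    · exact min_le_right _ _
    · exact Nat.zero_le _
  lower k j := by
    split
    · exact le_min (Nat.le_add_right _ _) (antitone_chainOfCode _ k.le_succ)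
    · exact (chainOfCode_eq_zero _ (by omega)).le
  fin := ⟨N, fun _ => chainOfCode_eq_zero _⟩

theorem toCode_mem (hd : 0 < d) (hnN : n ≤ N) {D : DFold d} (hw : ∑ᶠ k, D.a k = n) :
    toCode N D ∈ diamondCodes d n N := by
  have ha0 : ∀ k, N ≤ k → D.a k = 0 := fun k hk => D.a_eq_zero_of_weight_le hd (by omega)
  refine mem_diamondCodes.2 ⟨?_, fun k j => ?_⟩
  · rw [← hw, finsum_eq_sum_range_of_eq_zero ha0]
    exact codeOfChain_mem (D.antitone_a hd) ha0
  · have hk : (k : ℕ) + 1 ∈ Icc 1 N := mem_Icc.2 ⟨by omega, k.isLt⟩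
    rw [toCode, codeOfChain_apply _ hk, Nat.add_sub_cancel, Nat.mul_div_cancel_left _ (by omega)]
    exact Nat.sub_le_sub_right (D.upper k j) _

theorem weight_ofCode {p : (ℕ →₀ ℕ) × (Fin N → Fin d → ℕ)} (hp : p ∈ diamondCodes d n N) :
    ∑ᶠ k, (ofCode N p).a k = n := by
  show ∑ᶠ k, chainOfCode N p.1 k = n
  rw [finsum_eq_sum_range_of_eq_zero fun k => chainOfCode_eq_zero p.1]
  exact sum_range_chainOfCode (mem_diamondCodes.1 hp).1

theorem ofCode_toCode (hd : 0 < d) (hnN : n ≤ N) {D : DFold d} (hw : ∑ᶠ k, D.a k = n) :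
    ofCode N (toCode N D) = D := by
  have ha0 : ∀ k, N ≤ k → D.a k = 0 := fun k hk => D.a_eq_zero_of_weight_le hd (by omega)
  have ha : chainOfCode N (codeOfChain N D.a) = D.a :=
    chainOfCode_codeOfChain (D.antitone_a hd) ha0
  refine ext ha (funext₂ fun k j => ?_)
  have hub := D.upper k j
  have hlb := D.lower k j
  simp only [ofCode, toCode, ha]
  split
  · omega
  · have hak : D.a k = 0 := ha0 k (by omega)
    omega

theorem toCode_ofCode {p : (ℕ →₀ ℕ) × (Fin N → Fin d → ℕ)} (hp : p ∈ diamondCodes d n N) :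
    toCode N (ofCode N p) = p := by
  obtain ⟨hl, hf⟩ := mem_diamondCodes.1 hp
  refine Prod.ext (codeOfChain_chainOfCode hl) (funext₂ fun k j => ?_)
  have hstep := chainOfCode_eq_add p.1 k.isLt
  have hfkj := hf k j
  simp only [toCode, ofCode, dif_pos k.isLt, Fin.eta]
  omega

noncomputable def weightEquivDiamondCodes (hd : 0 < d) (hnN : n ≤ N) :
    {D : DFold d // ∑ᶠ k, D.a k = n} ≃ diamondCodes d n N where
  toFun D := ⟨toCode N D, toCode_mem hd hnN D.2⟩
  invFun p := ⟨ofCode N p, weight_ofCode p.2⟩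
  left_inv D := Subtype.ext (ofCode_toCode hd hnN D.2)
  right_inv p := Subtype.ext (toCode_ofCode p.2)

end DFold

theorem sFold_eq_sum {d n N : ℕ} (hd : 0 < d) (hnN : n ≤ N) :
    sFold d n = ∑ l ∈ dvdAntidiag (Icc 1 N) n, ∏ m ∈ Icc 1 N, (l m / m + 1) ^ d := by
  rw [sFold, ← Nat.card_coe_set_eq, ← DFold.card_diamondCodes, ← Nat.card_eq_finsetCard]
  exact Nat.card_congr (DFold.weightEquivDiamondCodes hd hnN)

/-- Corollary 3.1: `∑_{n≥0} s_d(n) qⁿ = ∏_{n≥1} (∑_{j≥0} (j+1)^d q^{jn})` in `ℤ⟦q⟧`,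
stated coefficient-wise: the `n`-th coefficient of the infinite product equals that of
the partial product over the first `N ≥ n` factors, since every further factor is
`1 + O(q^{N+1})`.  The `m`-th factor `∑_{j≥0} (j+1)^d q^{jm}` is the power series whose
`t`-th coefficient is `(t/m + 1)^d` if `m ∣ t` and `0` otherwise. -/
theorem schmidt_dfold_generating_function_alt (d : ℕ) (hd : 1 ≤ d)
    (n N : ℕ) (hnN : n ≤ N) :
    PowerSeries.coeff (R := ℤ) n (PowerSeries.mk fun m => (sFold d m : ℤ)) =
      PowerSeries.coeff (R := ℤ) n
        (∏ m ∈ Finset.Icc 1 N,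
          PowerSeries.mk fun t => if m ∣ t then ((t / m : ℕ) + 1 : ℤ) ^ d else 0) := by
  rw [coeff_mk, sFold_eq_sum hd hnN,
    coeff_prod_mk_ite_dvd (Icc 1 N) (fun _ j => ((j : ℤ) + 1) ^ d)]
  push_cast
  rfl
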